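/- If Λ(α,k,r) < 1 for a given k, r, and α = z/n, then with probability tending to 1 as n → ∞, the random formula F_k(n,rn) contains no pair of satisfying assignments at Hamming distance exactly z. -/

import Mathlib

open Real

/-- `Λ(α,k,r) = 2 (1 - 2^{1-k} + 2^{-k}(1-α)^k)^r / (α^α (1-α)^{1-α})`. -/
noncomputable def Lam (α : ℝ) (k : ℕ) (r : ℝ) : ℝ :=
  2 * (1 - 2 ^ (1 - (k : ℝ)) + 2 ^ (-(k : ℝ)) * (1 - α) ^ k) ^ r /
    (α ^ α * (1 - α) ^ (1 - α))

/-- A `k`-clause over `n` variables: an injective tuple of `k` variables together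
with signs for each. -/
abbrev ClauseT (n k : ℕ) :=
  {p : (Fin k → Fin n) × (Fin k → Bool) // Function.Injective p.1}

/-- A random formula is a tuple of `m` clauses; `SatF σ F` means `σ` satisfies
every clause of `F`. -/
def SatF {n k m : ℕ} (σ : Fin n → Bool) (F : Fin m → ClauseT n k) : Prop :=
  ∀ j : Fin m, ∃ i : Fin k, σ ((F j).1.1 i) = (F j).1.2 i

instance {n k m : ℕ} (σ : Fin n → Bool) (F : Fin m → ClauseT n k) :
    Decidable (SatF σ F) := by unfold SatF; infer_instance

/-- The probability (under the uniform random formula with `n` variables, `m`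
clauses of size `k`) that there exists a pair of satisfying assignments at Hamming
distance exactly `z`. -/
noncomputable def probPairAtDist (k n m z : ℕ) : ℝ :=
  ((Finset.univ.filter
      (fun F : Fin m → ClauseT n k =>
        ∃ σ τ : Fin n → Bool, SatF σ F ∧ SatF τ F ∧ hammingDist σ τ = z)).card : ℝ) /
    (Fintype.card (Fin m → ClauseT n k) : ℝ)

open Finset Filter

/-!
First moment method. Fix assignments `σ, τ` at Hamming distance `z = αn`. A uniformly random
`k`-clause is falsified by `σ` with probability `2^{-k}`, and by both `σ` and `τ` only if its
variables avoid the `z` positions where they differ, which has probability at most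
`2^{-k} (1-α)^k`. Hence it is satisfied by both with probability at most
`q = 1 - 2^{1-k} + 2^{-k} (1-α)^k`. There are `2^n binom(n,z)` such pairs and
`binom(n,z) α^z (1-α)^{n-z} ≤ 1`, so the expected number of pairs of solutions at distance `z`
of a formula with `rn` independent clauses is at most `2^n binom(n,z) q^{rn} ≤ Λ^n`, and by
Markov's inequality the probability that there is one is at most `Λ^n → 0`. When `α > 1` there
are no such pairs at all.
-/

theorem Nat.descFactorial_mul_pow_le {a n : ℕ} (h : a ≤ n) :
    ∀ k, a.descFactorial k * n ^ k ≤ n.descFactorial k * a ^ k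
  | 0 => by simp
  | k + 1 => by
    have key : (a - k) * n ≤ (n - k) * a := by
      rw [Nat.sub_mul, Nat.sub_mul, Nat.mul_comm a n]
      exact Nat.sub_le_sub_left (Nat.mul_le_mul_left k h) _
    calc a.descFactorial (k + 1) * n ^ (k + 1)
        = ((a - k) * n) * (a.descFactorial k * n ^ k) := by
          rw [Nat.descFactorial_succ, pow_succ]; ring
      _ ≤ ((n - k) * a) * (n.descFactorial k * a ^ k) :=
          Nat.mul_le_mul key (Nat.descFactorial_mul_pow_le h k)
      _ = n.descFactorial (k + 1) * a ^ (k + 1) := by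
          rw [Nat.descFactorial_succ, pow_succ]; ring

theorem Nat.descFactorial_le_div_pow_mul {a n : ℕ} (h : a ≤ n) (hn : 0 < n) (k : ℕ) :
    (a.descFactorial k : ℝ) ≤ ((a : ℝ) / n) ^ k * n.descFactorial k := by
  have hcast : (a.descFactorial k : ℝ) * n ^ k ≤ n.descFactorial k * a ^ k := by
    exact_mod_cast Nat.descFactorial_mul_pow_le h k
  rw [div_pow, div_mul_eq_mul_div, le_div_iff₀ (by positivity)]
  linarith

theorem choose_mul_pow_mul_pow_le_one {p : ℝ} (hp0 : 0 ≤ p) (hp1 : p ≤ 1) (n z : ℕ) :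
    n.choose z * p ^ z * (1 - p) ^ (n - z) ≤ 1 := by
  rcases lt_or_ge n z with hnz | hzn
  · simp [Nat.choose_eq_zero_of_lt hnz]
  have h1p : 0 ≤ 1 - p := sub_nonneg.2 hp1
  calc n.choose z * p ^ z * (1 - p) ^ (n - z)
      = p ^ z * (1 - p) ^ (n - z) * n.choose z := by ring
    _ ≤ ∑ i ∈ range (n + 1), p ^ i * (1 - p) ^ (n - i) * n.choose i :=
        single_le_sum (f := fun i => p ^ i * (1 - p) ^ (n - i) * (n.choose i : ℝ))
          (fun i _ => by positivity) (mem_range.2 (Nat.lt_succ_of_le hzn))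
    _ = 1 := by rw [← add_pow]; norm_num

theorem rpow_self_pos {x : ℝ} (hx : 0 ≤ x) : 0 < x ^ x := by
  rcases hx.eq_or_lt with rfl | hx
  · simp
  · exact rpow_pos_of_pos hx x

theorem entropy_pow_eq {α : ℝ} (hα0 : 0 ≤ α) (hα1 : α ≤ 1) {n z : ℕ}
    (hz : (z : ℝ) = α * n) :
    (α ^ α * (1 - α) ^ (1 - α)) ^ n = α ^ z * (1 - α) ^ (n - z) := by
  have hzn : z ≤ n := by exact_mod_cast hz ▸ mul_le_of_le_one_left n.cast_nonneg hα1
  rw [mul_pow, ← rpow_natCast, ← rpow_natCast (_ ^ (1 - α)), ← rpow_mul hα0,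
    ← rpow_mul (sub_nonneg.2 hα1), ← rpow_natCast α, ← rpow_natCast (1 - α), hz,
    Nat.cast_sub hzn, hz]
  ring_nf

noncomputable def pairSatBound (α : ℝ) (k : ℕ) : ℝ :=
  1 - 2 ^ (1 - (k : ℝ)) + 2 ^ (-(k : ℝ)) * (1 - α) ^ k

theorem pairSatBound_eq (α : ℝ) (k : ℕ) :
    pairSatBound α k = 1 - (2 - (1 - α) ^ k) / 2 ^ k := by
  rw [pairSatBound, rpow_sub two_pos, rpow_neg two_pos.le, rpow_one, rpow_natCast]
  ring

theorem pairSatBound_nonneg {α : ℝ} (hα : α ≤ 1) (k : ℕ) : 0 ≤ pairSatBound α k := by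
  rw [pairSatBound_eq, sub_nonneg, div_le_one (by positivity)]
  rcases k.eq_zero_or_pos with rfl | hk
  · norm_num
  · have : (2 : ℝ) ≤ 2 ^ k := le_self_pow₀ one_le_two hk.ne'
    have : 0 ≤ (1 - α) ^ k := pow_nonneg (sub_nonneg.2 hα) k
    linarith

theorem Lam_eq (α : ℝ) (k : ℕ) (r : ℝ) :
    Lam α k r = 2 * pairSatBound α k ^ r / (α ^ α * (1 - α) ^ (1 - α)) := rfl

theorem Lam_nonneg {α : ℝ} (hα0 : 0 ≤ α) (hα1 : α ≤ 1) (k : ℕ) (r : ℝ) :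
    0 ≤ Lam α k r := by
  have := pairSatBound_nonneg hα1 k
  have := sub_nonneg.2 hα1
  rw [Lam_eq]
  positivity

theorem card_subtype_eq_sub_hammingDist {ι β : Type*} [Fintype ι] [DecidableEq β] (x y : ι → β) :
    Fintype.card {i // x i = y i} = Fintype.card ι - hammingDist x y := by
  rw [Fintype.card_subtype, hammingDist, ← card_univ,
    ← card_filter_add_card_filter_not (s := univ) (fun i => x i = y i)]
  simp only [ne_eq, Nat.add_sub_cancel]

namespace ClauseT

variable {n k : ℕ}

def SatBy (c : ClauseT n k) (σ : Fin n → Bool) : Prop := ∃ i, σ (c.1.1 i) = c.1.2 i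

instance (c : ClauseT n k) (σ : Fin n → Bool) : Decidable (c.SatBy σ) :=
  inferInstanceAs (Decidable (∃ _, _))

theorem not_satBy_iff {c : ClauseT n k} {σ : Fin n → Bool} :
    ¬ c.SatBy σ ↔ ∀ i, c.1.2 i = !σ (c.1.1 i) := by
  simp only [SatBy, not_exists, Bool.eq_not_iff, ne_comm]

theorem card_eq : Fintype.card (ClauseT n k) = n.descFactorial k * 2 ^ k := by
  rw [Fintype.card_congr Equiv.prodSubtypeFstEquivSubtypeProd, Fintype.card_prod,
    Fintype.card_congr (Equiv.subtypeInjectiveEquivEmbedding _ _), Fintype.card_embedding_eq]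
  simp

theorem descFactorial_le_card_not_satBy (σ : Fin n → Bool) :
    n.descFactorial k ≤ #{c : ClauseT n k | ¬ c.SatBy σ} := by
  calc n.descFactorial k = Fintype.card (Fin k ↪ Fin n) := by simp [Fintype.card_embedding_eq]
    _ ≤ Fintype.card {c : ClauseT n k // ¬ c.SatBy σ} :=
      Fintype.card_le_of_injective
        (fun v => ⟨⟨(v, fun i => !σ (v i)), v.injective⟩, not_satBy_iff.2 fun _ => rfl⟩)
        fun v w hvw => DFunLike.coe_injective congr($hvw.1.1.1)
    _ = _ := Fintype.card_subtype _

/-- A clause falsified by both `σ` and `τ` has its variables where `σ` and `τ` agree, and its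
signs are then determined by `σ`. -/
theorem card_not_satBy_and_not_satBy_le (σ τ : Fin n → Bool) :
    #{c : ClauseT n k | ¬ c.SatBy σ ∧ ¬ c.SatBy τ} ≤
      (n - hammingDist σ τ).descFactorial k := by
  have agree : ∀ c : {c : ClauseT n k // ¬ c.SatBy σ ∧ ¬ c.SatBy τ}, ∀ i,
      σ (c.1.1.1 i) = τ (c.1.1.1 i) := fun c i => by
    simpa [not_satBy_iff.1 c.2.1 i] using not_satBy_iff.1 c.2.2 i
  rw [← Fintype.card_subtype]
  calc _ ≤ Fintype.card (Fin k ↪ {i // σ i = τ i}) := Fintype.card_le_of_injective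
        (fun c => ⟨fun i => ⟨c.1.1.1 i, agree c i⟩,
          fun _ _ h => c.1.2 (congrArg Subtype.val h)⟩) ?_
    _ = _ := by rw [Fintype.card_embedding_eq, card_subtype_eq_sub_hammingDist]; simp
  intro c d hcd
  have hvar : c.1.1.1 = d.1.1.1 := funext fun i => congr($(DFunLike.congr_fun hcd i).1)
  have hsign : c.1.1.2 = d.1.1.2 := by
    funext i
    rw [not_satBy_iff.1 c.2.1, not_satBy_iff.1 d.2.1, hvar]
  exact Subtype.ext (Subtype.ext (Prod.ext hvar hsign))

theorem card_satBy_and_satBy_add_le (σ τ : Fin n → Bool) :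
    #{c : ClauseT n k | c.SatBy σ ∧ c.SatBy τ} + 2 * n.descFactorial k ≤
      Fintype.card (ClauseT n k) + (n - hammingDist σ τ).descFactorial k := by
  have hsplit := card_filter_add_card_filter_not (s := univ) fun c : ClauseT n k =>
    c.SatBy σ ∧ c.SatBy τ
  have hunion := card_union_add_card_inter (filter (fun c : ClauseT n k => ¬ c.SatBy σ) univ)
    (filter (fun c => ¬ c.SatBy τ) univ)
  rw [← filter_or, ← filter_and] at hunion
  simp only [not_and_or] at hsplit
  have := descFactorial_le_card_not_satBy (k := k) σ
  have := descFactorial_le_card_not_satBy (k := k) τ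
  have := card_not_satBy_and_not_satBy_le (k := k) σ τ
  rw [card_univ] at hsplit
  omega

theorem card_satBy_and_satBy_div_le {α : ℝ} (hα : α ≤ 1) (hn : 0 < n)
    (σ τ : Fin n → Bool) (hd : (hammingDist σ τ : ℝ) = α * n) :
    (#{c : ClauseT n k | c.SatBy σ ∧ c.SatBy τ} : ℝ) / Fintype.card (ClauseT n k) ≤
      pairSatBound α k := by
  rw [card_eq]
  rcases (n.descFactorial k).eq_zero_or_pos with hD | hD
  · simpa [hD] using pairSatBound_nonneg hα k
  have hdn : hammingDist σ τ ≤ n := hammingDist_le_card_fintype.trans_eq (Fintype.card_fin n)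
  have hagree : ((n - hammingDist σ τ : ℕ) : ℝ) / n = 1 - α := by
    rw [Nat.cast_sub hdn, hd]; field_simp
  have hfalse := Nat.descFactorial_le_div_pow_mul (Nat.sub_le n (hammingDist σ τ)) hn k
  rw [hagree] at hfalse
  have hcount : (#{c : ClauseT n k | c.SatBy σ ∧ c.SatBy τ} : ℝ) + 2 * n.descFactorial k ≤
      n.descFactorial k * 2 ^ k + (n - hammingDist σ τ).descFactorial k := by
    exact_mod_cast card_eq (n := n) (k := k) ▸ card_satBy_and_satBy_add_le σ τ
  rw [div_le_iff₀ (by positivity), pairSatBound_eq]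
  calc _ ≤ (n.descFactorial k : ℝ) * 2 ^ k - 2 * n.descFactorial k +
        (1 - α) ^ k * n.descFactorial k := by linarith
    _ = _ := by push_cast; field_simp; ring

end ClauseT

theorem satF_iff {n k m : ℕ} {σ : Fin n → Bool} {F : Fin m → ClauseT n k} :
    SatF σ F ↔ ∀ j, (F j).SatBy σ := Iff.rfl

theorem card_filter_satF_and_satF (n k m : ℕ) (σ τ : Fin n → Bool) :
    #{F : Fin m → ClauseT n k | SatF σ F ∧ SatF τ F} =
      #{c : ClauseT n k | c.SatBy σ ∧ c.SatBy τ} ^ m := by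
  rw [← Fintype.card_piFinset_const]
  congr 1
  ext F
  simp [satF_iff, forall_and]

def pairsAtDist (n z : ℕ) : Finset ((Fin n → Bool) × (Fin n → Bool)) :=
  {p | hammingDist p.1 p.2 = z}

theorem card_pairsAtDist_le (n z : ℕ) : #(pairsAtDist n z) ≤ 2 ^ n * n.choose z := by
  calc _ ≤ #((univ : Finset (Fin n → Bool)) ×ˢ powersetCard z univ) :=
        card_le_card_of_injOn (fun p => (p.1, ({i | p.1 i ≠ p.2 i} : Finset (Fin n)))) ?_ ?_
    _ = 2 ^ n * n.choose z := by simp [card_powersetCard]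
  · intro p hp
    simpa [pairsAtDist, mem_powersetCard_univ, hammingDist] using hp
  · rintro ⟨σ, τ⟩ - ⟨σ', τ'⟩ - h
    simp only [Prod.mk.injEq] at h
    obtain ⟨rfl, hdiff⟩ := h
    refine Prod.ext rfl (funext fun i => ?_)
    have := Finset.ext_iff.1 hdiff i
    simp only [mem_filter, mem_univ, true_and] at this
    dsimp only
    revert this
    cases σ i <;> cases τ i <;> cases τ' i <;> simp

theorem probPairAtDist_le_sum (k n m z : ℕ) :
    probPairAtDist k n m z ≤ ∑ p ∈ pairsAtDist n z,
      ((#{c : ClauseT n k | c.SatBy p.1 ∧ c.SatBy p.2} : ℝ) / Fintype.card (ClauseT n k)) ^ m := by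
  have hunion :
      #{F : Fin m → ClauseT n k | ∃ σ τ, SatF σ F ∧ SatF τ F ∧ hammingDist σ τ = z} ≤
        ∑ p ∈ pairsAtDist n z, #{F : Fin m → ClauseT n k | SatF p.1 F ∧ SatF p.2 F} := by
    refine (card_le_card fun F hF => ?_).trans card_biUnion_le
    obtain ⟨σ, τ, hσ, hτ, hd⟩ := (mem_filter.1 hF).2
    exact mem_biUnion.2 ⟨(σ, τ), by simpa [pairsAtDist] using hd, by simpa using ⟨hσ, hτ⟩⟩
  simp only [card_filter_satF_and_satF] at hunion
  rw [probPairAtDist, Fintype.card_fun, Fintype.card_fin]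
  simp only [div_pow, ← sum_div, Nat.cast_pow]
  gcongr
  exact_mod_cast hunion

theorem probPairAtDist_le_Lam_pow {k n m z : ℕ} {α r : ℝ} (hn : 0 < n) (hα0 : 0 ≤ α)
    (hα1 : α ≤ 1) (hz : (z : ℝ) = α * n) (hm : (m : ℝ) = r * n) :
    probPairAtDist k n m z ≤ Lam α k r ^ n := by
  set q := pairSatBound α k
  set d := α ^ α * (1 - α) ^ (1 - α)
  have hq : 0 ≤ q := pairSatBound_nonneg hα1 k
  have hd : 0 < d := mul_pos (rpow_self_pos hα0) (rpow_self_pos (sub_nonneg.2 hα1))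
  have hpairs : (#(pairsAtDist n z) : ℝ) ≤ 2 ^ n * n.choose z := by
    exact_mod_cast card_pairsAtDist_le n z
  have hchoose : n.choose z * d ^ n ≤ 1 := by
    rw [entropy_pow_eq hα0 hα1 hz, ← mul_assoc]
    exact choose_mul_pow_mul_pow_le_one hα0 hα1 n z
  have hqm : q ^ m = (q ^ r) ^ n := by
    rw [← rpow_natCast, ← rpow_natCast, ← rpow_mul hq, hm]
  calc probPairAtDist k n m z ≤ ∑ p ∈ pairsAtDist n z, q ^ m := by
        refine (probPairAtDist_le_sum k n m z).trans (sum_le_sum fun p hp => ?_)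
        refine pow_le_pow_left₀ (by positivity)
          (ClauseT.card_satBy_and_satBy_div_le hα1 hn _ _ ?_) m
        rw [(mem_filter.1 hp).2, hz]
    _ ≤ 2 ^ n * n.choose z * (q ^ r) ^ n := by
        rw [sum_const, nsmul_eq_mul, hqm]
        gcongr
    _ = 2 ^ n * (q ^ r) ^ n * (n.choose z * d ^ n) / d ^ n := by field_simp
    _ ≤ 2 ^ n * (q ^ r) ^ n * 1 / d ^ n := by gcongr
    _ = Lam α k r ^ n := by rw [mul_one, ← mul_pow, Lam_eq, div_pow]

theorem probPairAtDist_eq_zero_of_lt {k n m z : ℕ} (h : n < z) :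
    probPairAtDist k n m z = 0 := by
  rw [probPairAtDist, filter_false_of_mem, card_empty, Nat.cast_zero, zero_div]
  rintro F - ⟨σ, τ, -, -, hd⟩
  have := (hammingDist_le_card_fintype (x := σ) (y := τ)).trans_eq (Fintype.card_fin n)
  omega

/-- If `Λ(α,k,r) < 1` with `α = z/n` and `r = m/n`, then w.h.p. the random formula
`F_k(n, rn)` contains no pair of satisfying assignments at Hamming distance exactly
`z = αn`. -/
theorem whp_no_pair_at_distance (k : ℕ) (α r : ℝ) (ν z m : ℕ → ℕ)
    (hν : StrictMono ν)
    (hz : ∀ j, (z j : ℝ) = α * (ν j : ℝ))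
    (hm : ∀ j, (m j : ℝ) = r * (ν j : ℝ))
    (hΛ : Lam α k r < 1) :
    Filter.Tendsto (fun j => probPairAtDist k (ν j) (m j) (z j))
      Filter.atTop (nhds 0) := by
  have hν_pos : ∀ᶠ j in atTop, 0 < ν j := hν.tendsto_atTop.eventually_gt_atTop 0
  have hα0 : 0 ≤ α := by
    obtain ⟨j, hj⟩ := hν_pos.exists
    exact nonneg_of_mul_nonneg_left (hz j ▸ (z j).cast_nonneg) (Nat.cast_pos.2 hj)
  rcases le_or_gt α 1 with hα1 | hα1
  · refine squeeze_zero' (Eventually.of_forall fun j => ?_)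
      (hν_pos.mono fun j hj => probPairAtDist_le_Lam_pow hj hα0 hα1 (hz j) (hm j))
      ((tendsto_pow_atTop_nhds_zero_of_lt_one (Lam_nonneg hα0 hα1 k r) hΛ).comp
        hν.tendsto_atTop)
    rw [probPairAtDist]
    positivity
  · refine tendsto_const_nhds.congr' (hν_pos.mono fun j hj => ?_)
    refine (probPairAtDist_eq_zero_of_lt ?_).symm
    have : (ν j : ℝ) < z j := by
      rw [hz j]
      exact lt_mul_left (Nat.cast_pos.2 hj) hα1
    exact_mod_cast this
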